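/- For every n ≥ 2 and every 1 ≤ j ≤ n−1, the identity ∂c_n/∂t_j = ∂c_n/∂t₀ − ∂c_j/∂t₀ holds identically as functions of (t₀, …, t_n), where c_j (which depends only on t₀, …, t_j) is regarded as a function of (t₀, …, t_n). -/

import Mathlib

/-- `κₘ = ρ + m - 1`. -/
noncomputable def kappa (ρ : ℝ) (m : ℕ) : ℝ := ρ + m - 1

/-- `[κ₁]! = 1`, `[κᵣ]! = κ₂κ₃⋯κᵣ` for `r ≥ 2` (and `[κ₀]! = 1` by convention). -/
noncomputable def kfact (ρ : ℝ) : ℕ → ℝ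
  | 0 => 1
  | 1 => 1
  | (r + 2) => kfact ρ (r + 1) * kappa ρ (r + 2)

/-- `τₘ = t₀ + t₁ + ⋯ + tₘ`. -/
noncomputable def tau (t : ℕ → ℝ) (m : ℕ) : ℝ := ∑ i ∈ Finset.range (m + 1), t i

/-- The `s`-fold iterate of the integration operator `(∂ₜ⁻¹ f)(x) = ∫₀ˣ f`. -/
noncomputable def iInt : ℕ → (ℝ → ℝ) → ℝ → ℝ
  | 0, f => f
  | (s + 1), f => fun x => ∫ y in (0:ℝ)..x, iInt s f y

/-- Partial derivative `∂f/∂tⱼ` of a vector-valued function of the variables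
`t = (t₀, t₁, t₂, …)`. -/
noncomputable def pdG {𝔤 : Type*} [NormedAddCommGroup 𝔤] [NormedSpace ℝ 𝔤]
    (j : ℕ) (f : (ℕ → ℝ) → 𝔤) (t : ℕ → ℝ) : 𝔤 :=
  deriv (fun s => f (Function.update t j s)) (t j)

/-- Iterated partial derivative `∂ᵏ/∂t₀ᵏ`. -/
noncomputable def pd0iter : ℕ → ((ℕ → ℝ) → ℝ) → (ℕ → ℝ) → ℝ
  | 0, f => f
  | (k + 1), f => pdG 0 (pd0iter k f)

/-- The function `cₙ(t₀, …, tₙ)` of the paper: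
`cₙ = Σ_{m=2}^{n-1} Σ_{r=2}^{m} Σ_{s=1}^{r-1} ((-1)^{r-1}[κᵣ]!/(r-s-1)!) τ_{m-1}^{r-s-1}
((∂ₜₘ⁻¹)ˢ a_{m,r})(tₘ) + Σ_{r=1}^{n} ((-1)^r [κᵣ]!/(r-1)!) τ_{n-1}^{r-1} a_{n,r}(tₙ)`. -/
noncomputable def cfun (ρ : ℝ) (a : ℕ → ℕ → ℝ → ℝ) (n : ℕ) (t : ℕ → ℝ) : ℝ :=
  (∑ m ∈ Finset.Icc 2 (n - 1), ∑ r ∈ Finset.Icc 2 m, ∑ s ∈ Finset.Icc 1 (r - 1),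
      ((-1 : ℝ) ^ (r - 1) * kfact ρ r / ((r - s - 1).factorial : ℝ))
        * tau t (m - 1) ^ (r - s - 1) * iInt s (a m r) (t m))
    + ∑ r ∈ Finset.Icc 1 n,
        ((-1 : ℝ) ^ r * kfact ρ r / ((r - 1).factorial : ℝ))
          * tau t (n - 1) ^ (r - 1) * a n r (t n)

open Finset

/-! Write the `m`-th block of `cₙ` as `Bₘ(τₘ₋₁, tₘ)` and its last sum as `Aₙ(τₙ₋₁, tₙ)`.
Since `τₖ` depends on `t₀` and on `tⱼ` (`j ≤ k`) in the same way, `∂cₙ/∂tⱼ` and `∂cₙ/∂t₀`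
differ only on the blocks `m ≤ j`; the blocks `m < j` together with `Aⱼ` make up `cⱼ`, so the
theorem reduces to `∂_y Bⱼ - ∂_x Bⱼ = -∂_x Aⱼ`. This holds term by term in `r`: `∂_y` lowers the
order of integration and `∂_x` the power of `x` by one, so `∂_y - ∂_x` telescopes the sum over
`s` down to its first term. -/

noncomputable def powDivFact (k : ℕ) (x : ℝ) : ℝ := x ^ k / (k.factorial : ℝ)

lemma powDivFact_zero (x : ℝ) : powDivFact 0 x = 1 := by
  simp [powDivFact]

lemma hasDerivAt_powDivFact_succ (k : ℕ) (x : ℝ) :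
    HasDerivAt (powDivFact (k + 1)) (powDivFact k x) x := by
  refine ((hasDerivAt_pow (k + 1) x).div_const ((k + 1).factorial : ℝ)).congr_deriv ?_
  rw [powDivFact, Nat.factorial_succ]
  push_cast
  field_simp

lemma continuous_iInt {f : ℝ → ℝ} (hf : Continuous f) : ∀ s, Continuous (iInt s f)
  | 0 => hf
  | s + 1 => intervalIntegral.continuous_primitive
      (fun _ _ => (continuous_iInt hf s).intervalIntegrable _ _) 0

lemma hasDerivAt_iInt_succ {f : ℝ → ℝ} (hf : Continuous f) (s : ℕ) (y : ℝ) :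
    HasDerivAt (iInt (s + 1) f) (iInt s f y) y :=
  (continuous_iInt hf s).integral_hasStrictDerivAt 0 y |>.hasDerivAt

noncomputable def primSum (f : ℝ → ℝ) (k : ℕ) (x y : ℝ) : ℝ :=
  ∑ i ∈ range k, powDivFact (k - 1 - i) x * iInt (i + 1) f y

lemma hasDerivAt_primSum_succ_fst (f : ℝ → ℝ) (k : ℕ) (x y : ℝ) :
    HasDerivAt (fun x => primSum f (k + 1) x y) (primSum f k x y) x := by
  have hsplit : (fun x => primSum f (k + 1) x y) =
      fun x => ∑ i ∈ range k, powDivFact (k - 1 - i + 1) x * iInt (i + 1) f y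
        + iInt (k + 1) f y := by
    funext x
    rw [primSum, sum_range_succ, Nat.add_sub_cancel, Nat.sub_self, powDivFact_zero, one_mul]
    congr 1
    refine sum_congr rfl fun i hi => ?_
    rw [show k - i = k - 1 - i + 1 by have := mem_range.mp hi; omega]
  rw [hsplit]
  refine (HasDerivAt.fun_sum fun i _ => ?_).add_const _
  exact (hasDerivAt_powDivFact_succ _ x).mul_const _

lemma hasDerivAt_primSum_succ_snd {f : ℝ → ℝ} (hf : Continuous f) (k : ℕ) (x y : ℝ) :
    HasDerivAt (primSum f (k + 1) x) (powDivFact k x * f y + primSum f k x y) y := by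
  have hderiv := HasDerivAt.fun_sum (u := range (k + 1))
    fun i _ => (hasDerivAt_iInt_succ hf i y).const_mul (powDivFact (k + 1 - 1 - i) x)
  refine hderiv.congr_deriv ?_
  rw [sum_range_succ', add_comm (powDivFact k x * f y)]
  congr 1
  exact sum_congr rfl fun i _ => by rw [show k + 1 - 1 - (i + 1) = k - 1 - i by omega]

lemma sum_Icc_eq_primSum (c : ℝ) (f : ℝ → ℝ) (r : ℕ) (x y : ℝ) :
    ∑ s ∈ Icc 1 (r - 1), (c / ((r - s - 1).factorial : ℝ)) * x ^ (r - s - 1) * iInt s f y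
      = c * primSum f (r - 1) x y := by
  rw [primSum, mul_sum, ← Ico_add_one_right_eq_Icc, sum_Ico_eq_sum_range, Nat.add_sub_cancel]
  refine sum_congr rfl fun i _ => ?_
  rw [show r - (1 + i) - 1 = r - 1 - 1 - i by omega, add_comm 1 i, powDivFact]
  ring

section Blocks

variable (ρ : ℝ) (a : ℕ → ℕ → ℝ → ℝ)

/-- `Bₘ(x, y)`: the `m`-th block of `cₙ` is `Bₘ(τₘ₋₁, tₘ)`. -/
noncomputable def blockFun (m : ℕ) (x y : ℝ) : ℝ :=
  ∑ r ∈ Icc 2 m, (-1 : ℝ) ^ (r - 1) * kfact ρ r * primSum (a m r) (r - 1) x y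

/-- `Aₙ(x, y)`: the last sum of `cₙ` is `Aₙ(τₙ₋₁, tₙ)`. -/
noncomputable def lastFun (n : ℕ) (x y : ℝ) : ℝ :=
  ∑ r ∈ Icc 1 n, (-1 : ℝ) ^ r * kfact ρ r * powDivFact (r - 1) x * a n r y

lemma cfun_eq_sum_blockFun_add_lastFun (n : ℕ) (t : ℕ → ℝ) :
    cfun ρ a n t = ∑ m ∈ Ico 1 n, blockFun ρ a m (tau t (m - 1)) (t m)
      + lastFun ρ a n (tau t (n - 1)) (t n) := by
  have hblocks : ∑ m ∈ Icc 2 (n - 1), blockFun ρ a m (tau t (m - 1)) (t m)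
      = ∑ m ∈ Ico 1 n, blockFun ρ a m (tau t (m - 1)) (t m) := by
    refine sum_subset (fun m hm => by simp only [mem_Icc, mem_Ico] at hm ⊢; omega) fun m hm hm' => ?_
    obtain rfl : m = 1 := by simp only [mem_Icc, mem_Ico] at hm hm'; omega
    simp [blockFun]
  rw [cfun, ← hblocks]
  congr 1
  · exact sum_congr rfl fun m _ => sum_congr rfl fun r _ => sum_Icc_eq_primSum _ _ _ _ _
  · exact sum_congr rfl fun r _ => by rw [powDivFact]; ring

lemma hasDerivAt_blockFun_fst (m : ℕ) (x y : ℝ) :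
    HasDerivAt (fun x => blockFun ρ a m x y)
      (∑ r ∈ Icc 2 m, (-1 : ℝ) ^ (r - 1) * kfact ρ r * primSum (a m r) (r - 2) x y) x := by
  refine HasDerivAt.fun_sum fun r hr => ?_
  rw [show r - 1 = r - 2 + 1 by simp only [mem_Icc] at hr; omega]
  exact (hasDerivAt_primSum_succ_fst _ _ x y).const_mul _

lemma hasDerivAt_blockFun_snd {m : ℕ} (ha : ∀ r, Continuous (a m r)) (x y : ℝ) :
    HasDerivAt (blockFun ρ a m x)
      (∑ r ∈ Icc 2 m, (-1 : ℝ) ^ (r - 1) * kfact ρ r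
        * (powDivFact (r - 2) x * a m r y + primSum (a m r) (r - 2) x y)) y := by
  refine HasDerivAt.fun_sum fun r hr => ?_
  rw [show r - 1 = r - 2 + 1 by simp only [mem_Icc] at hr; omega]
  exact (hasDerivAt_primSum_succ_snd (ha r) _ x y).const_mul _

lemma hasDerivAt_lastFun_fst (n : ℕ) (x y : ℝ) :
    HasDerivAt (fun x => lastFun ρ a n x y)
      (∑ r ∈ Icc 2 n, (-1 : ℝ) ^ r * kfact ρ r * powDivFact (r - 2) x * a n r y) x := by
  have hterm : ∀ r ∈ Icc 1 n,
      HasDerivAt (fun x => (-1 : ℝ) ^ r * kfact ρ r * powDivFact (r - 1) x * a n r y)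
        (if 2 ≤ r then (-1 : ℝ) ^ r * kfact ρ r * powDivFact (r - 2) x * a n r y else 0) x := by
    intro r hr
    by_cases h2 : 2 ≤ r
    · rw [if_pos h2, show r - 1 = r - 2 + 1 by omega]
      exact ((hasDerivAt_powDivFact_succ _ x).const_mul _).mul_const _
    · obtain rfl : r = 1 := by simp only [mem_Icc] at hr; omega
      simpa [powDivFact_zero] using hasDerivAt_const x (-kfact ρ 1 * a n 1 y)
  have hfilter : (Icc 1 n).filter (2 ≤ ·) = Icc 2 n := by
    ext r
    simp only [mem_filter, mem_Icc]
    omega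
  rw [← hfilter, sum_filter]
  exact HasDerivAt.fun_sum hterm

lemma deriv_blockFun_snd_sub_fst {m : ℕ} (ha : ∀ r, Continuous (a m r)) (x y : ℝ) :
    deriv (blockFun ρ a m x) y - deriv (fun x => blockFun ρ a m x y) x
      = -deriv (fun x => lastFun ρ a m x y) x := by
  rw [(hasDerivAt_blockFun_snd ρ a ha x y).deriv, (hasDerivAt_blockFun_fst ρ a m x y).deriv,
    (hasDerivAt_lastFun_fst ρ a m x y).deriv, ← sum_sub_distrib, ← sum_neg_distrib]
  refine sum_congr rfl fun r hr => ?_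
  obtain ⟨k, rfl⟩ : ∃ k, r = k + 2 := ⟨r - 2, by simp only [mem_Icc] at hr; omega⟩
  rw [show k + 2 - 1 = k + 1 by omega]
  ring

end Blocks

lemma tau_update_of_le {t : ℕ → ℝ} {j k : ℕ} (x : ℝ) (h : j ≤ k) :
    tau (Function.update t j x) k = tau t k + (x - t j) := by
  have hj : j ∈ range (k + 1) := mem_range.mpr (by omega)
  rw [tau, tau, sum_update_of_mem hj, sum_eq_add_sum_sdiff_singleton_of_mem hj]
  ring

lemma tau_update_of_lt {t : ℕ → ℝ} {j k : ℕ} (x : ℝ) (h : k < j) :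
    tau (Function.update t j x) k = tau t k :=
  sum_update_of_notMem (by simp only [mem_range]; omega) _ _

lemma hasDerivAt_comp_tau_update {g : ℝ → ℝ → ℝ} {t : ℕ → ℝ} {j k l : ℕ} (hkl : k < l)
    (hx : j ≤ k → DifferentiableAt ℝ (fun x => g x (t l)) (tau t k))
    (hy : j = l → DifferentiableAt ℝ (g (tau t k)) (t l)) :
    HasDerivAt (fun x => g (tau (Function.update t j x) k) (Function.update t j x l))
      (if j ≤ k then deriv (fun x => g x (t l)) (tau t k)
        else if j = l then deriv (g (tau t k)) (t l) else 0) (t j) := by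
  split_ifs with hjk hjl
  · have hshift : (fun x => g (tau (Function.update t j x) k) (Function.update t j x l))
        = fun x => g (x + (tau t k - t j)) (t l) := by
      funext x
      rw [tau_update_of_le x hjk, Function.update_of_ne (by omega)]
      congr 1
      ring
    have hderiv : HasDerivAt (fun x => g x (t l)) (deriv (fun x => g x (t l)) (tau t k))
        (t j + (tau t k - t j)) := by
      rw [add_sub_cancel]
      exact (hx hjk).hasDerivAt
    rw [hshift]
    exact hderiv.comp_add_const _ _
  · subst hjl
    have hsnd : (fun x => g (tau (Function.update t j x) k) (Function.update t j x j))
        = g (tau t k) := by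
      funext x
      rw [tau_update_of_lt x hkl, Function.update_self]
    rw [hsnd]
    exact (hy rfl).hasDerivAt
  · have hconst : (fun x => g (tau (Function.update t j x) k) (Function.update t j x l))
        = fun _ => g (tau t k) (t l) := by
      funext x
      rw [tau_update_of_lt x (by omega), Function.update_of_ne (Ne.symm hjl)]
    rw [hconst]
    exact hasDerivAt_const _ _

lemma pdG_cfun {ρ : ℝ} {a : ℕ → ℕ → ℝ → ℝ} (ha : ∀ m r, Continuous (a m r)) {n j : ℕ}
    (hjn : j < n) (t : ℕ → ℝ) :
    pdG j (cfun ρ a n) t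
      = ∑ m ∈ Ico 1 n,
          (if j ≤ m - 1 then deriv (fun x => blockFun ρ a m x (t m)) (tau t (m - 1))
            else if j = m then deriv (blockFun ρ a m (tau t (m - 1))) (t m) else 0)
        + deriv (fun x => lastFun ρ a n x (t n)) (tau t (n - 1)) := by
  refine HasDerivAt.deriv ?_
  simp_rw [cfun_eq_sum_blockFun_add_lastFun]
  refine (HasDerivAt.fun_sum fun m hm => ?_).add ?_
  · exact hasDerivAt_comp_tau_update (by simp only [mem_Ico] at hm; omega)
      (fun _ => (hasDerivAt_blockFun_fst ρ a m _ _).differentiableAt)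
      (fun _ => (hasDerivAt_blockFun_snd ρ a (ha m) _ _).differentiableAt)
  · have hlast := hasDerivAt_comp_tau_update (g := lastFun ρ a n) (t := t) (j := j)
      (k := n - 1) (l := n) (by omega)
      (fun _ => (hasDerivAt_lastFun_fst ρ a n _ _).differentiableAt) (fun h => by omega)
    rwa [if_pos (by omega)] at hlast

lemma sum_Ico_ite_le_sub_one {M : Type*} [AddCommGroup M] (F G : ℕ → M) {j n : ℕ}
    (hj : 1 ≤ j) (hjn : j < n) :
    ∑ m ∈ Ico 1 n, (if j ≤ m - 1 then F m else if j = m then G m else 0)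
      = ∑ m ∈ Ico 1 n, F m - ∑ m ∈ Ico 1 j, F m - F j + G j := by
  have hsplit : ∀ f : ℕ → M,
      ∑ m ∈ Ico 1 n, f m = ∑ m ∈ Ico 1 j, f m + (f j + ∑ m ∈ Ico (j + 1) n, f m) := fun f => by
    rw [← sum_Ico_consecutive f hj hjn.le, sum_eq_sum_Ico_succ_bot hjn]
  rw [hsplit, hsplit F, if_neg (by omega), if_pos rfl,
    sum_eq_zero fun m hm => by simp only [mem_Ico] at hm; rw [if_neg (by omega), if_neg (by omega)],
    sum_congr rfl fun m hm => by simp only [mem_Ico] at hm; rw [if_pos (by omega)]]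
  abel

theorem stmt7_general (ρ : ℝ) (a : ℕ → ℕ → ℝ → ℝ) (ha : ∀ m r, Continuous (a m r))
    (n j : ℕ) (hj1 : 1 ≤ j) (hjn : j ≤ n - 1) (t : ℕ → ℝ) :
    pdG j (cfun ρ a n) t = pdG 0 (cfun ρ a n) t - pdG 0 (cfun ρ a j) t := by
  rw [pdG_cfun ha (by omega : j < n), pdG_cfun ha (by omega : 0 < n),
    pdG_cfun ha (by omega : 0 < j), sum_Ico_ite_le_sub_one _ _ hj1 (by omega)]
  simp only [zero_le, if_true]
  linarith [deriv_blockFun_snd_sub_fst ρ a (ha j) (tau t (j - 1)) (t j)]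

/-- For `n ≥ 2` and `1 ≤ j ≤ n-1`, the identity
`∂cₙ/∂tⱼ = ∂cₙ/∂t₀ - ∂cⱼ/∂t₀` holds identically. -/
theorem stmt7 (ρ : ℝ) (a : ℕ → ℕ → ℝ → ℝ) (ha : ∀ m r, Continuous (a m r))
    (n j : ℕ) (hn : 2 ≤ n) (hj1 : 1 ≤ j) (hjn : j ≤ n - 1) (t : ℕ → ℝ) :
    pdG j (cfun ρ a n) t = pdG 0 (cfun ρ a n) t - pdG 0 (cfun ρ a j) t :=
  stmt7_general ρ a ha n j hj1 hjn t
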